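/- The double series ∑_{n=1}^∞ ∑_{k=1}^∞ 1 / (k (n+k)(n+2k)) equals (3/4)ζ(3). -/

import Mathlib

open scoped BigOperators

noncomputable def H (n : ℕ) : ℝ := ∑ j ∈ Finset.range n, (1:ℝ)/(j+1)

noncomputable def zeta3 : ℝ := ∑' n : ℕ, (1:ℝ)/((n:ℝ)+1)^3

open Filter Finset Function Topology

/-! With `a = k`, `b = n + k` the series is `∑_{1 ≤ a < b} 1 / (a b (a + b))`, the strict
upper triangle of the symmetric double series `T = ∑_{a, b ≥ 1} 1 / (a b (a + b))`, whose diagonal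
is `ζ(3) / 2`. Hence the claim amounts to `T = 2 ζ(3)`. Summing over `b` first telescopes to
`T = ∑ H_a / a²`. On the other hand `1 / (a b (a + b)) = 1 / (a (a + b)²) + 1 / (b (a + b)²)`
gives `T = 2 U` with `U = ∑_{a, b} 1 / (a (a + b)²) = ∑_m H_{m-1} / m²`, summing along `a + b = m`.
So `T - U = ∑ (H_a - H_{a-1}) / a² = ζ(3)`. -/

theorem Antitone.hasSum_sub_nat_add {f : ℕ → ℝ} (hf : Antitone f) (h0 : Tendsto f atTop (𝓝 0))
    (c : ℕ) : HasSum (fun k ↦ f k - f (k + c)) (∑ k ∈ range c, f k) := by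
  have hnonneg : ∀ k, 0 ≤ f k - f (k + c) := fun k ↦ sub_nonneg.2 (hf (k.le_add_right c))
  rw [hasSum_iff_tendsto_nat_of_nonneg hnonneg]
  have hpartial : ∀ N, ∑ k ∈ range N, (f k - f (k + c)) =
      ∑ k ∈ range c, f k - ∑ k ∈ range c, f (N + k) := by
    intro N
    have h := (sum_range_add f N c).symm.trans (by rw [add_comm N c, sum_range_add f c N])
    simp only [sum_sub_distrib, add_comm _ c]
    linarith
  have htail : Tendsto (fun N ↦ ∑ k ∈ range c, f (N + k)) atTop (𝓝 0) := by
    simpa using tendsto_finsetSum (range c) fun k _ ↦ h0.comp (tendsto_add_atTop_nat k)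
  simp only [hpartial]
  simpa using htail.const_sub (∑ k ∈ range c, f k)

def upperTriangleParam (q : ℕ × ℕ) : ℕ × ℕ := (q.2, q.1 + q.2 + 1)

theorem upperTriangleParam_injective : Injective upperTriangleParam :=
  fun q q' h ↦ by simp only [upperTriangleParam, Prod.ext_iff] at h ⊢; omega

theorem tsum_eq_two_nsmul_tsum_upper_add_tsum_diag {E : Type*} [NormedAddCommGroup E]
    [CompleteSpace E] {f : ℕ × ℕ → E} (hf : Summable f) (hsymm : ∀ p, f p.swap = f p) :
    ∑' p, f p = 2 • ∑' q, f (upperTriangleParam q) + ∑' n, f (n, n) := by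
  set u := upperTriangleParam
  set d : ℕ → ℕ × ℕ := fun n ↦ (n, n)
  have hu : Injective u := upperTriangleParam_injective
  have hl : Injective (Prod.swap ∘ u) := Prod.swap_injective.comp hu
  have hd : Injective d := fun n n' h ↦ congrArg Prod.fst h
  have hdisj : Disjoint (Set.range u) (Set.range (Prod.swap ∘ u)) := by
    refine Set.disjoint_left.2 ?_
    rintro _ ⟨q, rfl⟩ ⟨q', h⟩
    simp only [u, upperTriangleParam, comp_apply, Prod.swap_prod_mk, Prod.ext_iff] at h
    omega
  have hoff : (Set.range d)ᶜ = Set.range u ∪ Set.range (Prod.swap ∘ u) := by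
    ext ⟨a, b⟩
    simp only [Set.mem_compl_iff, Set.mem_range, Set.mem_union, u, upperTriangleParam, d,
      comp_apply, Prod.swap_prod_mk, Prod.ext_iff]
    constructor
    · intro h
      rcases lt_or_gt_of_ne (fun hab : a = b ↦ h ⟨a, rfl, hab⟩) with hab | hab
      · exact Or.inl ⟨(b - a - 1, a), rfl, by omega⟩
      · exact Or.inr ⟨(a - b - 1, b), by omega, rfl⟩
    · rintro (⟨q, h1, h2⟩ | ⟨q, h1, h2⟩) ⟨n, h3, h4⟩ <;> omega
  have hupper := hu.hasSum_range_iff.2 (hf.comp_injective hu).hasSum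
  have hlower := hl.hasSum_range_iff.2 (hf.comp_injective hl).hasSum
  have hdiag := hd.hasSum_range_iff.2 (hf.comp_injective hd).hasSum
  have hsum := hupper.add_disjoint hdisj hlower
  rw [← hoff] at hsum
  refine (hdiag.add_compl hsum).tsum_eq.trans ?_
  simp only [comp_def, hsymm, two_nsmul]
  abel

theorem one_div_mul_mul_add_le {a b : ℝ} (ha : 0 < a) (hb : 0 < b) :
    1 / (a * b * (a + b)) ≤ 1 / 2 * (1 / (a * √a) * (1 / (b * √b))) := by
  have hamgm : 2 * √a * √b ≤ a + b := by
    simpa [Real.sq_sqrt ha.le, Real.sq_sqrt hb.le] using two_mul_le_add_sq √a √b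
  rw [one_div_mul_one_div, one_div_mul_one_div]
  apply one_div_le_one_div_of_le (by positivity)
  calc 2 * (a * √a * (b * √b)) = a * b * (2 * √a * √b) := by ring
    _ ≤ a * b * (a + b) := by gcongr

theorem summable_one_div_nat_add_one_mul_sqrt :
    Summable fun n : ℕ ↦ 1 / (((n : ℝ) + 1) * √((n : ℝ) + 1)) := by
  refine ((summable_nat_add_iff 1).2
    (Real.summable_one_div_nat_rpow.2 (by norm_num : (1 : ℝ) < 3 / 2))).congr fun n ↦ ?_
  have hpos : (0 : ℝ) < n + 1 := by positivity
  rw [show (3 : ℝ) / 2 = 1 + 1 / 2 by norm_num, Nat.cast_add_one, Real.rpow_add hpos,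
    Real.rpow_one, ← Real.sqrt_eq_rpow]

theorem H_succ (n : ℕ) : H (n + 1) = H n + 1 / ((n : ℝ) + 1) := sum_range_succ _ n

namespace EulerSum

/-- `kernel (a - 1, b - 1) = 1 / (a b (a + b))`. -/
noncomputable def kernel (p : ℕ × ℕ) : ℝ :=
  1 / (((p.1 : ℝ) + 1) * ((p.2 : ℝ) + 1) * ((p.1 : ℝ) + p.2 + 2))

noncomputable def halfKernel (p : ℕ × ℕ) : ℝ :=
  1 / (((p.1 : ℝ) + 1) * ((p.1 : ℝ) + p.2 + 2) ^ 2)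

theorem kernel_swap (p : ℕ × ℕ) : kernel p.swap = kernel p := by
  simp only [kernel, Prod.fst_swap, Prod.snd_swap]
  ring_nf

theorem kernel_eq_halfKernel_add_halfKernel_swap (p : ℕ × ℕ) :
    kernel p = halfKernel p + halfKernel p.swap := by
  simp only [kernel, halfKernel, Prod.fst_swap, Prod.snd_swap]
  field_simp
  ring

theorem halfKernel_nonneg (p : ℕ × ℕ) : 0 ≤ halfKernel p := by
  unfold halfKernel; positivity

theorem halfKernel_le_kernel (p : ℕ × ℕ) : halfKernel p ≤ kernel p := by
  rw [kernel_eq_halfKernel_add_halfKernel_swap]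
  exact le_add_of_nonneg_right (halfKernel_nonneg _)

theorem summable_kernel : Summable kernel := by
  have hs := summable_one_div_nat_add_one_mul_sqrt
  refine .of_nonneg_of_le (fun p ↦ by unfold kernel; positivity) (fun p ↦ ?_)
    ((hs.mul_of_nonneg hs (fun _ ↦ by positivity) (fun _ ↦ by positivity)).mul_left (1 / 2))
  convert one_div_mul_mul_add_le (a := (p.1 : ℝ) + 1) (b := (p.2 : ℝ) + 1)
    (by positivity) (by positivity) using 2
  simp only [kernel]
  ring

theorem summable_halfKernel : Summable halfKernel :=
  .of_nonneg_of_le halfKernel_nonneg halfKernel_le_kernel summable_kernel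

theorem hasSum_kernel_fiber (j : ℕ) :
    HasSum (fun k ↦ kernel (j, k)) (H (j + 1) / ((j : ℝ) + 1) ^ 2) := by
  have hanti : Antitone fun k : ℕ ↦ 1 / ((k : ℝ) + 1) :=
    fun k k' h ↦ one_div_le_one_div_of_le (by positivity) (by gcongr)
  have htel := (hanti.hasSum_sub_nat_add tendsto_one_div_add_atTop_nhds_zero_nat
    (j + 1)).div_const (((j : ℝ) + 1) ^ 2)
  refine htel.congr_fun fun k ↦ ?_
  simp only [kernel]
  push_cast
  field_simp
  ring

theorem hasSum_halfKernel_antidiagonal :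
    HasSum (fun m : ℕ ↦ H (m + 1) / ((m : ℝ) + 2) ^ 2) (∑' p, halfKernel p) := by
  refine (HasAntidiagonal.sigmaAntidiagonalEquivProd.hasSum_iff.2
    summable_halfKernel.hasSum).sigma fun m ↦ ?_
  convert hasSum_fintype _
  simp only [comp_def, HasAntidiagonal.sigmaAntidiagonalEquivProd_apply]
  rw [sum_coe_sort (antidiagonal m) halfKernel, H, sum_div]
  have hfiber : ∀ p ∈ antidiagonal m,
      halfKernel p = 1 / ((p.1 : ℝ) + 1) / ((m : ℝ) + 2) ^ 2 := by
    intro p hp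
    rw [HasAntidiagonal.mem_antidiagonal] at hp
    rw [halfKernel, ← hp, div_div]
    push_cast
    ring
  rw [sum_congr rfl hfiber,
    Nat.sum_antidiagonal_eq_sum_range_succ fun a _ ↦ 1 / ((a : ℝ) + 1) / ((m : ℝ) + 2) ^ 2]

theorem hasSum_kernel : HasSum (fun j : ℕ ↦ H (j + 1) / ((j : ℝ) + 1) ^ 2) (∑' p, kernel p) :=
  summable_kernel.hasSum.prod_fiberwise hasSum_kernel_fiber

theorem hasSum_halfKernel : HasSum (fun j : ℕ ↦ H j / ((j : ℝ) + 1) ^ 2) (∑' p, halfKernel p) := by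
  have hH0 : H 0 = 0 := sum_range_zero _
  rw [← hasSum_nat_add_iff' 1, sum_range_one, hH0, zero_div, sub_zero]
  refine hasSum_halfKernel_antidiagonal.congr_fun fun m ↦ ?_
  push_cast
  ring

theorem tsum_kernel_sub_tsum_halfKernel : ∑' p, kernel p - ∑' p, halfKernel p = zeta3 := by
  refine ((hasSum_kernel.sub hasSum_halfKernel).congr_fun fun j ↦ ?_).tsum_eq.symm
  rw [H_succ]
  field_simp
  ring

theorem tsum_kernel_eq_two_mul_tsum_halfKernel : ∑' p, kernel p = 2 * ∑' p, halfKernel p := by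
  have hswap : Summable fun p : ℕ × ℕ ↦ halfKernel p.swap :=
    summable_halfKernel.comp_injective Prod.swap_injective
  have hswap_tsum : ∑' p : ℕ × ℕ, halfKernel p.swap = ∑' p, halfKernel p :=
    (Equiv.prodComm ℕ ℕ).tsum_eq halfKernel
  rw [tsum_congr kernel_eq_halfKernel_add_halfKernel_swap, summable_halfKernel.tsum_add hswap,
    hswap_tsum, two_mul]

theorem tsum_kernel : ∑' p, kernel p = 2 * zeta3 := by
  linarith [tsum_kernel_sub_tsum_halfKernel, tsum_kernel_eq_two_mul_tsum_halfKernel]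

theorem tsum_kernel_diag : ∑' n : ℕ, kernel (n, n) = zeta3 / 2 := by
  rw [zeta3, ← tsum_div_const]
  refine tsum_congr fun n ↦ ?_
  simp only [kernel]
  field_simp
  ring

theorem tsum_kernel_upperTriangleParam : ∑' q, kernel (upperTriangleParam q) = 3 / 4 * zeta3 := by
  have h := tsum_eq_two_nsmul_tsum_upper_add_tsum_diag summable_kernel kernel_swap
  rw [tsum_kernel, tsum_kernel_diag, two_nsmul] at h
  linarith

end EulerSum

theorem stmt12 : ∑' n : ℕ, ∑' k : ℕ,
    (1:ℝ) / (((k:ℝ)+1) * ((n:ℝ)+(k:ℝ)+2) * ((n:ℝ)+2*(k:ℝ)+3)) = (3/4) * zeta3 := by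
  have hsummand : ∀ n k : ℕ, (1:ℝ) / (((k:ℝ)+1) * ((n:ℝ)+(k:ℝ)+2) * ((n:ℝ)+2*(k:ℝ)+3)) =
      EulerSum.kernel (upperTriangleParam (n, k)) := by
    intro n k
    simp only [EulerSum.kernel, upperTriangleParam]
    push_cast
    ring_nf
  have hs : Summable fun q ↦ EulerSum.kernel (upperTriangleParam q) :=
    EulerSum.summable_kernel.comp_injective upperTriangleParam_injective
  simp only [hsummand]
  rw [← hs.tsum_prod' hs.prod_factor, EulerSum.tsum_kernel_upperTriangleParam]
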